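/- Assume s is a potential satisfying (S1)–(S3). If u : ℤ^n → ℝ is minimal and satisfies u(i + e_k) = u(i) for all i and 2 ≤ k ≤ n, then for every φ : ℤ^n → ℝ with φ(i + e_k) = φ(i) for all i and 2 ≤ k ≤ n whose support is contained in a set of the form {i ∈ ℤ^n : p ≤ i_1 ≤ q} for some integers p ≤ q, one has Σ_{j ∈ ℤ × {0}^{n−1}} [S_j(u + φ) − S_j(u)] ≥ 0. -/

import Mathlib

open scoped BigOperators

namespace FK

/-- The lattice `ℤ^n`. -/
abbrev Lat (n : ℕ) := Fin n → ℤ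

/-- The `ℓ¹` norm on `ℤ^n`. -/
def latNorm {n : ℕ} (i : Lat n) : ℕ := ∑ k, (i k).natAbs

/-- The ball `B_0^r = {k ∈ ℤ^n : ‖k‖ ≤ r}`. -/
abbrev B0 (n r : ℕ) := {k : Lat n // latNorm k ≤ r}

lemma B0.coord_mem {n r : ℕ} (k : B0 n r) (i : Fin n) :
    k.1 i ∈ Finset.Icc (-(r : ℤ)) (r : ℤ) := by
  have h1 : (k.1 i).natAbs ≤ latNorm k.1 :=
    Finset.single_le_sum (f := fun j => (k.1 j).natAbs) (fun _ _ => Nat.zero_le _)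
      (Finset.mem_univ i)
  have h2 := k.2
  simp only [Finset.mem_Icc]
  omega

noncomputable instance B0.instFintype (n r : ℕ) : Fintype (B0 n r) :=
  Fintype.ofInjective
    (fun k : B0 n r => (fun i => (⟨k.1 i, B0.coord_mem k i⟩ : (Finset.Icc (-(r : ℤ)) (r : ℤ)))))
    (fun a b h => Subtype.ext (funext fun i => congrArg Subtype.val (congrFun h i)))

/-- The center of the ball `B_0^r`. -/
def B0.zero (n r : ℕ) : B0 n r := ⟨0, by simp [latNorm]⟩

/-- The local potential `S_j(u) = s((i ↦ u(j+i))|_{B_0^r})`. -/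
noncomputable def Spot {n r : ℕ} (s : (B0 n r → ℝ) → ℝ) (j : Lat n) (u : Lat n → ℝ) : ℝ :=
  s fun k => u (j + k.1)

/-- The partial derivative of `s : ℝ^{B_0^r} → ℝ` with respect to the coordinate `k`. -/
noncomputable def pder {n r : ℕ} (s : (B0 n r → ℝ) → ℝ) (k : B0 n r) (x : B0 n r → ℝ) : ℝ :=
  deriv (fun t => s (Function.update x k t)) (x k)

/-- The partial derivative `∂_i S_j(u)` of `S_j` with respect to the variable `u(i)`. -/
noncomputable def pderS {n r : ℕ} (s : (B0 n r → ℝ) → ℝ) (i j : Lat n) (u : Lat n → ℝ) : ℝ :=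
  deriv (fun t => Spot s j (Function.update u i t)) (u i)

/-- Conditions (S1)–(S3) on the potential, together with `C²` smoothness. -/
structure IsPotential (n r : ℕ) (s : (B0 n r → ℝ) → ℝ) : Prop where
  smooth : ContDiff ℝ 2 s
  periodic : ∀ x : B0 n r → ℝ, s (fun k => x k + 1) = s x
  bddBelow : ∃ M : ℝ, ∀ x, M ≤ s x
  coercive : ∀ k j : B0 n r, latNorm (k.1 - j.1) = 1 →
    ∀ C : ℝ, ∃ R : ℝ, ∀ x : B0 n r → ℝ, R ≤ |x k - x j| → C ≤ s x
  cross_nonpos : ∀ k j : B0 n r, k ≠ j → ∀ x, pder (pder s j) k x ≤ 0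
  cross_neg : ∀ j : B0 n r, latNorm j.1 = 1 → ∀ x, pder (pder s j) (B0.zero n r) x < 0

/-- `u` satisfies the Euler–Lagrange equation (EL) at the site `i`. -/
def SolvesAt {n r : ℕ} (s : (B0 n r → ℝ) → ℝ) (u : Lat n → ℝ) (i : Lat n) : Prop :=
  ∑ k : B0 n r, pderS s i (i + k.1) u = 0

/-- `u` is a solution of the Euler–Lagrange equation (EL). -/
def IsSolution {n r : ℕ} (s : (B0 n r → ℝ) → ℝ) (u : Lat n → ℝ) : Prop :=
  ∀ i : Lat n, SolvesAt s u i

/-- The `m`-th standard basis vector of `ℤ^n` (`0`-indexed: `latE 0 = e_1`). -/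
def latE {n : ℕ} (m : ℕ) : Lat n := fun k => if (k : ℕ) = m then 1 else 0

/-- The lattice point `T_i = (i,0,…,0)`. -/
def latT {n : ℕ} (i : ℤ) : Lat n := fun k => if (k : ℕ) = 0 then i else 0

/-- The first coordinate index of `Fin (n+2)`. -/
def coord0 (n : ℕ) : Fin (n + 2) := ⟨0, by omega⟩

/-- The second coordinate index of `Fin (n+2)`. -/
def coord1 (n : ℕ) : Fin (n + 2) := ⟨1, by omega⟩

/-- Configurations of period one in every coordinate direction (the set `Γ_0`). -/
def fullyPeriodic {n : ℕ} (u : Lat n → ℝ) : Prop :=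
  ∀ i : Lat n, ∀ k : Fin n, u (i + latE (k : ℕ)) = u i

noncomputable def J0 {n r : ℕ} (s : (B0 n r → ℝ) → ℝ) (u : Lat n → ℝ) : ℝ := Spot s 0 u

noncomputable def c0 {n r : ℕ} (s : (B0 n r → ℝ) → ℝ) : ℝ :=
  sInf (J0 s '' {u | fullyPeriodic u})

def M0 {n r : ℕ} (s : (B0 n r → ℝ) → ℝ) : Set (Lat n → ℝ) :=
  {u | fullyPeriodic u ∧ J0 s u = c0 s}

/-- `v`, `w` form an adjacent (gap) pair of the set `A`:  `v < w` pointwise, both belong to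
`A`, and no element of `A` lies strictly between them. -/
def Adjacent {n : ℕ} (A : Set (Lat n → ℝ)) (v w : Lat n → ℝ) : Prop :=
  v ∈ A ∧ w ∈ A ∧ (∀ i, v i < w i) ∧ ∀ u ∈ A, v ≤ u → u ≤ w → u = v ∨ u = w

/-- Configurations of period one in the coordinate directions `2,…,n`. -/
def tailPeriodic {n : ℕ} (u : Lat n → ℝ) : Prop :=
  ∀ i : Lat n, ∀ k : Fin n, (k : ℕ) ≠ 0 → u (i + latE (k : ℕ)) = u i

/-- The set `Γ̂_1(v,w)`. -/
def Gamma1hat {n : ℕ} (v w : Lat n → ℝ) : Set (Lat n → ℝ) :=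
  {u | tailPeriodic u ∧ v ≤ u ∧ u ≤ w}

noncomputable def J1i {n r : ℕ} (s : (B0 n r → ℝ) → ℝ) (i : ℤ) (u : Lat n → ℝ) : ℝ :=
  Spot s (latT i) u - c0 s

noncomputable def J1pq {n r : ℕ} (s : (B0 n r → ℝ) → ℝ) (p q : ℤ) (u : Lat n → ℝ) : ℝ :=
  ∑ i ∈ Finset.Icc p q, J1i s i u

/-- The renormalized functional `J_1 = liminf_{p→-∞, q→∞} J_{1;p,q}`, as an extended real. -/
noncomputable def J1 {n r : ℕ} (s : (B0 n r → ℝ) → ℝ) (u : Lat n → ℝ) : EReal :=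
  Filter.liminf (fun pq : ℤ × ℤ => ((J1pq s pq.1 pq.2 u : ℝ) : EReal))
    (Filter.atBot ×ˢ Filter.atTop)

/-- The filter `|i| → ∞` on `ℤ`. -/
noncomputable def absAtTop : Filter ℤ := Filter.comap (fun i : ℤ => |i|) Filter.atTop

/-- The set `Γ_1(v,w)` of configurations heteroclinic in `i_1` from `v` to `w`. -/
def Gamma1 {n : ℕ} (v w : Lat n → ℝ) : Set (Lat n → ℝ) :=
  {u | u ∈ Gamma1hat v w ∧
    Filter.Tendsto (fun i : ℤ => |u (latT i) - v (latT i)|) Filter.atBot (nhds 0) ∧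
    Filter.Tendsto (fun i : ℤ => |u (latT i) - w (latT i)|) Filter.atTop (nhds 0)}

noncomputable def c1 {n r : ℕ} (s : (B0 n r → ℝ) → ℝ) (v w : Lat n → ℝ) : EReal :=
  sInf (J1 s '' Gamma1 v w)

def M1 {n r : ℕ} (s : (B0 n r → ℝ) → ℝ) (v w : Lat n → ℝ) : Set (Lat n → ℝ) :=
  {u ∈ Gamma1 v w | J1 s u = c1 s v w}

/-- The set `Γ_1(w,v)` of configurations heteroclinic in `i_1` from `w` down to `v`. -/
def Gamma1rev {n : ℕ} (v w : Lat n → ℝ) : Set (Lat n → ℝ) :=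
  {u | u ∈ Gamma1hat v w ∧
    Filter.Tendsto (fun i : ℤ => |u (latT i) - w (latT i)|) Filter.atBot (nhds 0) ∧
    Filter.Tendsto (fun i : ℤ => |u (latT i) - v (latT i)|) Filter.atTop (nhds 0)}

noncomputable def c1rev {n r : ℕ} (s : (B0 n r → ℝ) → ℝ) (v w : Lat n → ℝ) : EReal :=
  sInf (J1 s '' Gamma1rev v w)

def M1rev {n r : ℕ} (s : (B0 n r → ℝ) → ℝ) (v w : Lat n → ℝ) : Set (Lat n → ℝ) :=
  {u ∈ Gamma1rev v w | J1 s u = c1rev s v w}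

/-- The set `Γ_1(v)`, for `v ∈ M_0`. -/
def Gamma1v {n : ℕ} (v : Lat n → ℝ) : Set (Lat n → ℝ) :=
  {u | u ∈ Gamma1hat (fun i => v i - 1) (fun i => v i + 1) ∧
    Filter.Tendsto (fun i : ℤ => |u (latT i) - v (latT i)|) absAtTop (nhds 0)}

noncomputable def c1v {n r : ℕ} (s : (B0 n r → ℝ) → ℝ) (v : Lat n → ℝ) : EReal :=
  sInf (J1 s '' Gamma1v v)

def M1v {n r : ℕ} (s : (B0 n r → ℝ) → ℝ) (v : Lat n → ℝ) : Set (Lat n → ℝ) :=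
  {u ∈ Gamma1v v | J1 s u = c1v s v}

/-! ### Periodic configurations with general periods (`Γ_0(l)` etc.) -/

def GammaPer {n : ℕ} (l : Fin n → ℕ) : Set (Lat n → ℝ) :=
  {u | ∀ i : Lat n, ∀ k : Fin n, u (i + (l k : ℤ) • latE (k : ℕ)) = u i}

noncomputable def J0l {n r : ℕ} (s : (B0 n r → ℝ) → ℝ) (l : Fin n → ℕ) (u : Lat n → ℝ) : ℝ :=
  ∑ i ∈ Fintype.piFinset (fun k => Finset.Ico (0 : ℤ) (l k)), Spot s i u

noncomputable def c0l {n r : ℕ} (s : (B0 n r → ℝ) → ℝ) (l : Fin n → ℕ) : ℝ :=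
  sInf (J0l s l '' GammaPer l)

def M0l {n r : ℕ} (s : (B0 n r → ℝ) → ℝ) (l : Fin n → ℕ) : Set (Lat n → ℝ) :=
  {u ∈ GammaPer l | J0l s l u = c0l s l}

/-! ### The `l`-periodic analogues of `Γ_1` (for Proposition 3.20) -/

/-- The finite slice `{j | j_1 = i, 0 ≤ j_k < l_k (k ≥ 2)}`. -/
noncomputable def sliceBox {n : ℕ} (l : Fin n → ℕ) (i : ℤ) : Finset (Lat n) :=
  Fintype.piFinset fun k => if (k : ℕ) = 0 then {i} else Finset.Ico (0 : ℤ) (l k)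

def tailPeriodicL {n : ℕ} (l : Fin n → ℕ) (u : Lat n → ℝ) : Prop :=
  ∀ i : Lat n, ∀ k : Fin n, (k : ℕ) ≠ 0 → u (i + (l k : ℤ) • latE (k : ℕ)) = u i

/-- `∏_{k=2}^{n} l_k`. -/
noncomputable def tailProd {n : ℕ} (l : Fin n → ℕ) : ℝ :=
  ∏ k ∈ Finset.univ.filter (fun k : Fin n => (k : ℕ) ≠ 0), (l k : ℝ)

noncomputable def J1il {n r : ℕ} (s : (B0 n r → ℝ) → ℝ) (l : Fin n → ℕ) (i : ℤ)
    (u : Lat n → ℝ) : ℝ :=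
  (∑ j ∈ sliceBox l i, Spot s j u) - tailProd l * c0 s

noncomputable def J1pql {n r : ℕ} (s : (B0 n r → ℝ) → ℝ) (l : Fin n → ℕ) (p q : ℤ)
    (u : Lat n → ℝ) : ℝ :=
  ∑ i ∈ Finset.Icc p q, J1il s l i u

noncomputable def J1l {n r : ℕ} (s : (B0 n r → ℝ) → ℝ) (l : Fin n → ℕ) (u : Lat n → ℝ) :
    EReal :=
  Filter.liminf (fun pq : ℤ × ℤ => ((J1pql s l pq.1 pq.2 u : ℝ) : EReal))
    (Filter.atBot ×ˢ Filter.atTop)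

def Gamma1hatL {n : ℕ} (l : Fin n → ℕ) (v w : Lat n → ℝ) : Set (Lat n → ℝ) :=
  {u | tailPeriodicL l u ∧ v ≤ u ∧ u ≤ w}

def Gamma1L {n : ℕ} (l : Fin n → ℕ) (v w : Lat n → ℝ) : Set (Lat n → ℝ) :=
  {u | u ∈ Gamma1hatL l v w ∧
    Filter.Tendsto (fun i : ℤ => ∑ j ∈ sliceBox l i, |u j - v j|) Filter.atBot (nhds 0) ∧
    Filter.Tendsto (fun i : ℤ => ∑ j ∈ sliceBox l i, |u j - w j|) Filter.atTop (nhds 0)}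

noncomputable def c1L {n r : ℕ} (s : (B0 n r → ℝ) → ℝ) (l : Fin n → ℕ) (v w : Lat n → ℝ) :
    EReal :=
  sInf (J1l s l '' Gamma1L l v w)

def M1L {n r : ℕ} (s : (B0 n r → ℝ) → ℝ) (l : Fin n → ℕ) (v w : Lat n → ℝ) :
    Set (Lat n → ℝ) :=
  {u ∈ Gamma1L l v w | J1l s l u = c1L s l v w}

/-! ### Minimal and Birkhoff configurations -/

/-- `u` is a (global) minimizer for the potentials `S_j`. -/
def Minimal {n r : ℕ} (s : (B0 n r → ℝ) → ℝ) (u : Lat n → ℝ) : Prop :=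
  ∀ B : Finset (Lat n), ∀ v : Lat n → ℝ,
    (∀ i : Lat n, v i ≠ 0 → i ∈ B ∧ ∀ k : Lat n, latNorm (k - i) ≤ r → k ∈ B) →
    ∑ j ∈ B, Spot s j u ≤ ∑ j ∈ B, Spot s j (u + v)

/-- `u` is Birkhoff: all its integer translates are comparable with `u`. -/
def Birkhoff {n : ℕ} (u : Lat n → ℝ) : Prop :=
  ∀ k : Fin n, ∀ j : ℤ,
    (∀ i, u (i + j • latE (k : ℕ)) < u i) ∨ (∀ i, u (i + j • latE (k : ℕ)) = u i) ∨
      (∀ i, u i < u (i + j • latE (k : ℕ)))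

/-! ### The second-order objects (`Γ̂_2`, `J_2`, `M_2`) -/

/-- Configurations of period one in the coordinate directions `3,…,n`. -/
def tailPeriodic2 {n : ℕ} (u : Lat n → ℝ) : Prop :=
  ∀ i : Lat n, ∀ k : Fin n, 2 ≤ (k : ℕ) → u (i + latE (k : ℕ)) = u i

/-- The set `Γ̂_2(v,w)`. -/
def Gamma2hat {n : ℕ} (v w : Lat n → ℝ) : Set (Lat n → ℝ) :=
  {u | tailPeriodic2 u ∧ v ≤ u ∧ u ≤ w}

/-- The row `E_i = {j ∈ ℤ^n : j_2 = i, j_3 = ⋯ = j_n = 0}`. -/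
def Erow (n : ℕ) (i : ℤ) : Set (Lat n) :=
  {j | (∀ k : Fin n, (k : ℕ) = 1 → j k = i) ∧ ∀ k : Fin n, 2 ≤ (k : ℕ) → j k = 0}

/-- `J_{2,i}(u) = J_1(τ²_{-i} u) - c_1 = ∑_{j ∈ E_0} [S_j(τ²_{-i}u) - S_j(v)]`, where `v` is the
base configuration. -/
noncomputable def J2i {n r : ℕ} (s : (B0 n r → ℝ) → ℝ) (v : Lat n → ℝ) (i : ℤ)
    (u : Lat n → ℝ) : ℝ :=
  ∑' j : Erow n 0, (Spot s j.1 (fun x => u (x + i • latE 1)) - Spot s j.1 v)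

noncomputable def J2pq {n r : ℕ} (s : (B0 n r → ℝ) → ℝ) (v : Lat n → ℝ) (p q : ℤ)
    (u : Lat n → ℝ) : ℝ :=
  ∑ i ∈ Finset.Icc p q, J2i s v i u

/-- The renormalized functional `J_2`, as an extended real. -/
noncomputable def J2 {n r : ℕ} (s : (B0 n r → ℝ) → ℝ) (v : Lat n → ℝ) (u : Lat n → ℝ) :
    EReal :=
  Filter.liminf (fun pq : ℤ × ℤ => ((J2pq s v pq.1 pq.2 u : ℝ) : EReal))
    (Filter.atBot ×ˢ Filter.atTop)

/-- The set `Γ_2(v,w)` of configurations heteroclinic in `i_2` from `v` to `w`. -/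
def Gamma2 {n : ℕ} (v w : Lat n → ℝ) : Set (Lat n → ℝ) :=
  {u | u ∈ Gamma2hat v w ∧
    Filter.Tendsto (fun i : ℤ => ∑' j : Erow n i, |u j.1 - v j.1|) Filter.atBot (nhds 0) ∧
    Filter.Tendsto (fun i : ℤ => ∑' j : Erow n i, |u j.1 - w j.1|) Filter.atTop (nhds 0)}

noncomputable def c2 {n r : ℕ} (s : (B0 n r → ℝ) → ℝ) (v w : Lat n → ℝ) : EReal :=
  sInf (J2 s v '' Gamma2 v w)

def M2 {n r : ℕ} (s : (B0 n r → ℝ) → ℝ) (v w : Lat n → ℝ) : Set (Lat n → ℝ) :=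
  {u ∈ Gamma2 v w | J2 s v u = c2 s v w}



section Helpers17

lemma coord_natAbs_le {n : ℕ} (z : Lat n) (t : Fin n) : (z t).natAbs ≤ latNorm z :=
  Finset.single_le_sum (f := fun j => (z j).natAbs) (fun _ _ => Nat.zero_le _) (Finset.mem_univ t)

lemma tp_shift {n : ℕ} {u : Lat n → ℝ} (h : tailPeriodic u) (i : Lat n) (k : Fin n)
    (hk : (k : ℕ) ≠ 0) (m : ℤ) : u (i + m • latE (k : ℕ)) = u i := by
  induction m using Int.induction_on with
  | zero => simp
  | succ m ih =>
      have e : i + ((m : ℤ) + 1) • latE (k : ℕ) = (i + (m : ℤ) • latE (k : ℕ)) + latE (k : ℕ) := by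
        funext t
        simp only [Pi.add_apply, Pi.smul_apply, smul_eq_mul, latE]
        split_ifs <;> ring
      rw [e, h _ k hk, ih]
  | pred m ih =>
      have e : i + (-(m : ℤ)) • latE (k : ℕ) = (i + (-(m : ℤ) - 1) • latE (k : ℕ)) + latE (k : ℕ) := by
        funext t
        simp only [Pi.add_apply, Pi.smul_apply, smul_eq_mul, latE]
        split_ifs <;> ring
      have h2 := h (i + (-(m : ℤ) - 1) • latE (k : ℕ)) k hk
      rw [← e] at h2
      rw [← h2, ih]

lemma tp_eval {n : ℕ} {u : Lat (n + 2) → ℝ} (h : tailPeriodic u) (j : Lat (n + 2)) :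
    u j = u (latT (j (coord0 n))) := by
  have aux : ∀ T : Finset (Fin (n + 2)), coord0 n ∉ T →
      ∀ x : Lat (n + 2), u (x + ∑ k ∈ T, j k • latE (k : ℕ)) = u x := by
    intro T
    induction T using Finset.induction_on with
    | empty => intro _ x; simp
    | @insert a T ha ih =>
        intro hc x
        have ha0 : (a : ℕ) ≠ 0 := by
          intro hh
          have : coord0 n = a := (Fin.ext hh.symm : coord0 n = a)
          exact hc (this ▸ Finset.mem_insert_self a T)
        have hcT : coord0 n ∉ T := fun hh => hc (Finset.mem_insert_of_mem hh)
        rw [Finset.sum_insert ha]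
        have e : x + (j a • latE (a : ℕ) + ∑ k ∈ T, j k • latE (k : ℕ))
            = (x + ∑ k ∈ T, j k • latE (k : ℕ)) + j a • latE (a : ℕ) := by abel
        rw [e, tp_shift h _ a ha0, ih hcT x]
  have hdecomp : j = latT (j (coord0 n)) + ∑ k ∈ Finset.univ.erase (coord0 n), j k • latE (k : ℕ) := by
    funext t
    simp only [Pi.add_apply, Finset.sum_apply, Pi.smul_apply, smul_eq_mul, latT, latE]
    by_cases ht : (t : ℕ) = 0
    · have htc : t = coord0 n := Fin.ext ht
      have hz : ∑ k ∈ Finset.univ.erase (coord0 n),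
          j k * (if (t : ℕ) = (k : ℕ) then (1 : ℤ) else 0) = 0 := by
        apply Finset.sum_eq_zero
        intro k hk
        have hk' : k ≠ coord0 n := Finset.ne_of_mem_erase hk
        have hne : (t : ℕ) ≠ (k : ℕ) := by
          intro hh
          apply hk'
          apply Fin.ext
          omega
        rw [if_neg hne, mul_zero]
      rw [if_pos ht, hz, add_zero, htc]
    · have hz : ∑ k ∈ Finset.univ.erase (coord0 n),
          j k * (if (t : ℕ) = (k : ℕ) then (1 : ℤ) else 0) = j t := by
        rw [Finset.sum_eq_single t]
        · rw [if_pos rfl, mul_one]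
        · intro b _ hbt
          have : (t : ℕ) ≠ (b : ℕ) := fun hh => hbt (Fin.ext hh.symm)
          rw [if_neg this, mul_zero]
        · intro hts
          exact absurd (Finset.mem_erase.mpr
            ⟨fun hh => ht (by rw [hh]; rfl), Finset.mem_univ t⟩) hts
      rw [if_neg ht, hz, zero_add]
  conv_lhs => rw [hdecomp]
  exact aux _ (Finset.notMem_erase _ _) _

lemma spot_shift {n r : ℕ} {s : (B0 (n + 2) r → ℝ) → ℝ} {u : Lat (n + 2) → ℝ}
    (h : tailPeriodic u) (j : Lat (n + 2)) : Spot s j u = Spot s (latT (j (coord0 n))) u := by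
  unfold Spot
  congr 1
  funext k
  rw [tp_eval h (j + k.1), tp_eval h (latT (j (coord0 n)) + k.1)]
  have : (j + k.1) (coord0 n) = ((latT (j (coord0 n)) : Lat (n + 2)) + k.1) (coord0 n) := by
    simp [Pi.add_apply, latT, coord0]
  rw [this]

lemma tp_add {n : ℕ} {u v : Lat n → ℝ} (hu : tailPeriodic u) (hv : tailPeriodic v) :
    tailPeriodic (u + v) := by
  intro i k hk
  simp [Pi.add_apply, hu i k hk, hv i k hk]

end Helpers17

/-- Lemma 3.22 — row-wise minimality of minimal configurations periodic in
the directions `2,…,n`. -/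
theorem statement_17 (n r : ℕ) (s : (B0 (n + 2) (r + 1) → ℝ) → ℝ)
    (hs : IsPotential (n + 2) (r + 1) s) (u : Lat (n + 2) → ℝ)
    (hper : tailPeriodic u) (hmin : Minimal s u)
    (φ : Lat (n + 2) → ℝ) (hφper : tailPeriodic φ) (p q : ℤ) (hpq : p ≤ q)
    (hsupp : ∀ j : Lat (n + 2), φ j ≠ 0 → p ≤ j (coord0 n) ∧ j (coord0 n) ≤ q) :
    0 ≤ ∑' i : ℤ, (Spot s (latT i) (u + φ) - Spot s (latT i) u) := by
  classical
  set Rz : ℤ := (r : ℤ) + 1 with hRz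
  set d : ℤ → ℝ := fun i => Spot s (latT i) (u + φ) - Spot s (latT i) u with hd
  set I : Finset ℤ := Finset.Icc (p - Rz) (q + Rz) with hI
  have hknorm : ∀ (k : B0 (n + 2) (r + 1)) (t : Fin (n + 2)), (k.1 t).natAbs ≤ r + 1 :=
    fun k t => le_trans (coord_natAbs_le k.1 t) k.2
  have hvan : ∀ i : ℤ, i ∉ I → d i = 0 := by
    intro i hi
    have hspot : Spot s (latT i) (u + φ) = Spot s (latT i) u := by
      unfold Spot
      congr 1
      funext k
      have hφ0 : φ ((latT i : Lat (n + 2)) + k.1) = 0 := by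
        by_contra h0
        obtain ⟨h1, h2⟩ := hsupp _ h0
        have he : ((latT i : Lat (n + 2)) + k.1) (coord0 n) = i + k.1 (coord0 n) := by
          simp [Pi.add_apply, latT, coord0]
        rw [he] at h1 h2
        have hk := hknorm k (coord0 n)
        rw [hI, Finset.mem_Icc] at hi
        push_neg at hi
        rcases lt_or_ge i (p - Rz) with hc | hc
        · omega
        · have := hi hc; omega
      simp [Pi.add_apply, hφ0]
    simp [hd, hspot]
  have htsum : ∑' i : ℤ, (Spot s (latT i) (u + φ) - Spot s (latT i) u) = ∑ i ∈ I, d i :=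
    tsum_eq_sum hvan
  rw [htsum]
  by_contra hD0
  push_neg at hD0
  set D : ℝ := ∑ i ∈ I, d i with hDdef
  -- the uniform bound C
  set Fs : Finset ℝ :=
    ((Finset.Icc (p - 2 * Rz) (q + 2 * Rz)).image fun m => u (latT m)) ∪
    ((Finset.Icc (p - 2 * Rz) (q + 2 * Rz)).image fun m => u (latT m) + φ (latT m)) with hFs
  set cfgs : Finset (B0 (n + 2) (r + 1) → ℝ) := Fintype.piFinset (fun _ => Fs) with hcfgs
  obtain ⟨C0, hC0⟩ := Finset.exists_le (cfgs.image fun c => |s c|)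
  set C : ℝ := max C0 0 with hC
  have hCpos : (0 : ℝ) ≤ C := le_max_right _ _
  have hbound : ∀ (j : Lat (n + 2)) (v : Lat (n + 2) → ℝ),
      j (coord0 n) ∈ I → (∀ x, v x = 0 ∨ v x = φ x) → |Spot s j (u + v)| ≤ C := by
    intro j v hj hv
    have hmem : (fun k : B0 (n + 2) (r + 1) => (u + v) (j + k.1)) ∈ cfgs := by
      rw [hcfgs, Fintype.mem_piFinset]
      intro k
      have he : (j + k.1) (coord0 n) = j (coord0 n) + k.1 (coord0 n) := rfl
      have hm : j (coord0 n) + k.1 (coord0 n) ∈ Finset.Icc (p - 2 * Rz) (q + 2 * Rz) := by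
        rw [Finset.mem_Icc]
        rw [hI, Finset.mem_Icc] at hj
        have hk := hknorm k (coord0 n)
        omega
      have hu : u (j + k.1) = u (latT (j (coord0 n) + k.1 (coord0 n))) := by
        rw [tp_eval hper (j + k.1), he]
      have hφe : φ (j + k.1) = φ (latT (j (coord0 n) + k.1 (coord0 n))) := by
        rw [tp_eval hφper (j + k.1), he]
      rcases hv (j + k.1) with h0 | h1
      · rw [hFs]
        apply Finset.mem_union_left
        rw [Pi.add_apply, h0, add_zero, hu]
        exact Finset.mem_image_of_mem _ hm
      · rw [hFs]
        apply Finset.mem_union_right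
        rw [Pi.add_apply, h1, hu, hφe]
        exact Finset.mem_image_of_mem _ hm
    exact le_trans (hC0 _ (Finset.mem_image_of_mem _ hmem)) (le_max_left _ _)
  -- main inequality for each box size mm
  have main : ∀ mm : ℕ,
      0 ≤ D * (2 * (mm : ℝ) + 1) ^ (n + 1) +
        ((I.card : ℝ) * (2 * (mm : ℝ) + 4 * (r : ℝ) + 5) ^ (n + 1) -
          (I.card : ℝ) * (2 * (mm : ℝ) + 1) ^ (n + 1)) * (2 * C) := by
    intro mm
    set Nb : ℤ := (mm : ℤ) + 2 * Rz with hNb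
    set tb : Fin (n + 2) → Finset ℤ :=
      fun k => if (k : ℕ) = 0 then I else Finset.Icc (-Nb) Nb with htb
    set tk : Fin (n + 2) → Finset ℤ :=
      fun k => if (k : ℕ) = 0 then I else Finset.Icc (-(mm : ℤ)) (mm : ℤ) with htk
    set Bbox := Fintype.piFinset tb with hBbox
    set Bulk := Fintype.piFinset tk with hBulk
    set v : Lat (n + 2) → ℝ :=
      fun x => if (∀ k : Fin (n + 2), (k : ℕ) ≠ 0 → |x k| ≤ (mm : ℤ) + Rz) then φ x else 0 with hv
    have hvp : ∀ x, v x = 0 ∨ v x = φ x := by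
      intro x
      rw [hv]
      dsimp only
      split_ifs
      · right; rfl
      · left; rfl
    have hmin' : 0 ≤ ∑ j ∈ Bbox, (Spot s j (u + v) - Spot s j u) := by
      have hsup : ∀ x : Lat (n + 2), v x ≠ 0 → x ∈ Bbox ∧
          ∀ y : Lat (n + 2), latNorm (y - x) ≤ r + 1 → y ∈ Bbox := by
        intro x hx
        have hcond : ∀ k : Fin (n + 2), (k : ℕ) ≠ 0 → |x k| ≤ (mm : ℤ) + Rz := by
          by_contra hc
          apply hx
          rw [hv]
          dsimp only
          rw [if_neg hc]
        have hφx : φ x ≠ 0 := by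
          intro h0
          apply hx
          rw [hv]
          dsimp only
          split_ifs <;> simp [h0]
        obtain ⟨hx1, hx2⟩ := hsupp x hφx
        constructor
        · rw [hBbox, Fintype.mem_piFinset]
          intro k
          rw [htb]
          dsimp only
          split_ifs with hk0
          · have hkc : k = coord0 n := Fin.ext hk0
            rw [hkc, hI, Finset.mem_Icc]
            omega
          · rw [Finset.mem_Icc]
            have h3 := abs_le.mp (hcond k hk0)
            omega
        · intro y hy
          have hyk : ∀ t : Fin (n + 2), (y t - x t).natAbs ≤ r + 1 := by
            intro t
            have h4 : ((y - x) t).natAbs ≤ latNorm (y - x) := coord_natAbs_le (y - x) t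
            have h5 : (y - x) t = y t - x t := rfl
            rw [h5] at h4
            omega
          rw [hBbox, Fintype.mem_piFinset]
          intro k
          rw [htb]
          dsimp only
          split_ifs with hk0
          · have hkc : k = coord0 n := Fin.ext hk0
            rw [hkc, hI, Finset.mem_Icc]
            have := hyk (coord0 n)
            omega
          · rw [Finset.mem_Icc]
            have h3 := abs_le.mp (hcond k hk0)
            have h4 := hyk k
            omega
      have h0 := hmin Bbox v hsup
      rw [Finset.sum_sub_distrib]
      linarith
    have hsub : Bulk ⊆ Bbox := by
      intro j hj
      rw [hBulk, Fintype.mem_piFinset] at hj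
      rw [hBbox, Fintype.mem_piFinset]
      intro k
      have hjk := hj k
      rw [htk] at hjk
      rw [htb]
      dsimp only at hjk ⊢
      split_ifs at hjk ⊢ with hk0
      · exact hjk
      · rw [Finset.mem_Icc] at hjk ⊢
        omega
    have hbulkval : ∀ j ∈ Bulk, Spot s j (u + v) - Spot s j u = d (j (coord0 n)) := by
      intro j hj
      rw [hBulk, Fintype.mem_piFinset] at hj
      have hjk : ∀ k : Fin (n + 2), (k : ℕ) ≠ 0 → |j k| ≤ (mm : ℤ) := by
        intro k hk
        have hjj := hj k
        rw [htk] at hjj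
        dsimp only at hjj
        rw [if_neg hk, Finset.mem_Icc] at hjj
        exact abs_le.mpr hjj
      have hspot1 : Spot s j (u + v) = Spot s j (u + φ) := by
        unfold Spot
        congr 1
        funext k
        have hvφ : v (j + k.1) = φ (j + k.1) := by
          rw [hv]
          dsimp only
          rw [if_pos]
          intro t ht
          have h1 := abs_le.mp (hjk t ht)
          have h2 := hknorm k t
          have he : (j + k.1) t = j t + k.1 t := rfl
          rw [he, abs_le]
          omega
        rw [Pi.add_apply, Pi.add_apply, hvφ]
      rw [hspot1, spot_shift (tp_add hper hφper) j, spot_shift hper j, hd]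
    have hcard1 : (Finset.Icc (-(mm : ℤ)) (mm : ℤ)).card = 2 * mm + 1 := by
      rw [Int.card_Icc]
      omega
    have hcard2 : (Finset.Icc (-Nb) Nb).card = 2 * mm + 4 * r + 5 := by
      rw [Int.card_Icc]
      omega
    have hbulksum : ∑ j ∈ Bulk, d (j (coord0 n)) = D * ((2 * mm + 1 : ℕ) : ℝ) ^ (n + 1) := by
      have hps := Finset.prod_univ_sum tk (fun k x => if (k : ℕ) = 0 then d x else 1)
      have hterm : ∀ j : Lat (n + 2),
          (∏ k : Fin (n + 2), if (k : ℕ) = 0 then d (j k) else 1) = d (j (coord0 n)) := by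
        intro j
        rw [Finset.prod_eq_single (coord0 n)]
        · exact if_pos rfl
        · intro b _ hb
          have : (b : ℕ) ≠ 0 := fun hh => hb (Fin.ext hh)
          rw [if_neg this]
        · intro h
          exact absurd (Finset.mem_univ _) h
      calc ∑ j ∈ Bulk, d (j (coord0 n))
          = ∑ j ∈ Bulk, ∏ k : Fin (n + 2), (if (k : ℕ) = 0 then d (j k) else 1) := by
            refine Finset.sum_congr rfl fun j _ => ?_
            rw [hterm j]
        _ = ∏ k : Fin (n + 2), ∑ x ∈ tk k, (if (k : ℕ) = 0 then d x else 1) := by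
            rw [hBulk, ← hps]
        _ = D * ((2 * mm + 1 : ℕ) : ℝ) ^ (n + 1) := by
            rw [Fin.prod_univ_succ]
            have hf0 : ∑ x ∈ tk 0, (if (((0 : Fin (n + 2)) : ℕ)) = 0 then d x else 1) = D := by
              have ht0 : tk (0 : Fin (n + 2)) = I := by
                simp [htk]
              rw [ht0]
              simp only [Fin.val_zero, if_pos rfl]
              exact hDdef.symm
            have hfs : ∀ k : Fin (n + 1),
                ∑ x ∈ tk k.succ, (if ((k.succ : Fin (n + 2)) : ℕ) = 0 then d x else 1)
                  = ((2 * mm + 1 : ℕ) : ℝ) := by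
              intro k
              have hk0 : ((k.succ : Fin (n + 2)) : ℕ) ≠ 0 := by
                simp [Fin.val_succ]
              have ht1 : tk k.succ = Finset.Icc (-(mm : ℤ)) (mm : ℤ) := by
                rw [htk]
                dsimp only
                rw [if_neg hk0]
              rw [ht1]
              simp only [if_neg hk0]
              rw [Finset.sum_const, hcard1, nsmul_eq_mul, mul_one]
            rw [hf0]
            congr 1
            rw [Finset.prod_congr rfl fun k _ => hfs k, Finset.prod_const,
              Finset.card_univ, Fintype.card_fin]
    have hrest : ∑ j ∈ Bbox \ Bulk, (Spot s j (u + v) - Spot s j u)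
        ≤ ((Bbox \ Bulk).card : ℝ) * (2 * C) := by
      have hstep : ∀ j ∈ Bbox \ Bulk, Spot s j (u + v) - Spot s j u ≤ 2 * C := by
        intro j hj
        have hjB : j ∈ Bbox := (Finset.mem_sdiff.mp hj).1
        have hjc0 : j (coord0 n) ∈ I := by
          rw [hBbox, Fintype.mem_piFinset] at hjB
          have := hjB (coord0 n)
          rw [htb] at this
          dsimp only at this
          rwa [if_pos (show ((coord0 n : ℕ)) = 0 from rfl)] at this
        have b1 := hbound j v hjc0 hvp
        have b2 := hbound j 0 hjc0 (fun x => Or.inl rfl)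
        rw [add_zero] at b2
        have e1 := le_abs_self (Spot s j (u + v))
        have e2 := neg_abs_le (Spot s j u)
        linarith [abs_nonneg (Spot s j (u + v)), abs_nonneg (Spot s j u)]
      have := Finset.sum_le_card_nsmul (Bbox \ Bulk) _ (2 * C) hstep
      rwa [nsmul_eq_mul] at this
    have hsplit : ∑ j ∈ Bbox, (Spot s j (u + v) - Spot s j u)
        = ∑ j ∈ Bbox \ Bulk, (Spot s j (u + v) - Spot s j u)
          + ∑ j ∈ Bulk, (Spot s j (u + v) - Spot s j u) :=
      (Finset.sum_sdiff hsub).symm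
    have hbulk2 : ∑ j ∈ Bulk, (Spot s j (u + v) - Spot s j u)
        = D * ((2 * mm + 1 : ℕ) : ℝ) ^ (n + 1) := by
      rw [Finset.sum_congr rfl hbulkval, hbulksum]
    have hcardBbox : Bbox.card = I.card * (2 * mm + 4 * r + 5) ^ (n + 1) := by
      rw [hBbox, Fintype.card_piFinset, Fin.prod_univ_succ]
      have ht0 : tb (0 : Fin (n + 2)) = I := by simp [htb]
      rw [ht0]
      congr 1
      have hfs : ∀ k : Fin (n + 1), (tb k.succ).card = 2 * mm + 4 * r + 5 := by
        intro k
        have hk0 : ((k.succ : Fin (n + 2)) : ℕ) ≠ 0 := by simp [Fin.val_succ]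
        rw [htb]
        dsimp only
        rw [if_neg hk0, hcard2]
      rw [Finset.prod_congr rfl fun k _ => hfs k, Finset.prod_const,
        Finset.card_univ, Fintype.card_fin]
    have hcardBulk : Bulk.card = I.card * (2 * mm + 1) ^ (n + 1) := by
      rw [hBulk, Fintype.card_piFinset, Fin.prod_univ_succ]
      have ht0 : tk (0 : Fin (n + 2)) = I := by simp [htk]
      rw [ht0]
      congr 1
      have hfs : ∀ k : Fin (n + 1), (tk k.succ).card = 2 * mm + 1 := by
        intro k
        have hk0 : ((k.succ : Fin (n + 2)) : ℕ) ≠ 0 := by simp [Fin.val_succ]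
        rw [htk]
        dsimp only
        rw [if_neg hk0, hcard1]
      rw [Finset.prod_congr rfl fun k _ => hfs k, Finset.prod_const,
        Finset.card_univ, Fintype.card_fin]
    have hcardsd : ((Bbox \ Bulk).card : ℝ)
        = (I.card : ℝ) * ((2 * mm + 4 * r + 5 : ℕ) : ℝ) ^ (n + 1)
          - (I.card : ℝ) * ((2 * mm + 1 : ℕ) : ℝ) ^ (n + 1) := by
      rw [Finset.card_sdiff_of_subset hsub, Nat.cast_sub (Finset.card_le_card hsub),
        hcardBbox, hcardBulk]
      push_cast
      ring
    have hfinal : 0 ≤ D * ((2 * mm + 1 : ℕ) : ℝ) ^ (n + 1)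
        + (((Bbox \ Bulk).card : ℝ)) * (2 * C) := by
      rw [← hbulk2]
      calc (0 : ℝ) ≤ ∑ j ∈ Bbox, (Spot s j (u + v) - Spot s j u) := hmin'
        _ = ∑ j ∈ Bbox \ Bulk, (Spot s j (u + v) - Spot s j u)
              + ∑ j ∈ Bulk, (Spot s j (u + v) - Spot s j u) := hsplit
        _ ≤ ((Bbox \ Bulk).card : ℝ) * (2 * C)
              + ∑ j ∈ Bulk, (Spot s j (u + v) - Spot s j u) := by linarith [hrest]
        _ = ∑ j ∈ Bulk, (Spot s j (u + v) - Spot s j u)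
              + ((Bbox \ Bulk).card : ℝ) * (2 * C) := by ring
    rw [hcardsd] at hfinal
    push_cast at hfinal
    have hcast : (2 * (mm : ℝ) + 4 * (r : ℝ) + 5) = 2 * (mm : ℝ) + 4 * (r : ℝ) + 5 := rfl
    nlinarith [hfinal]
  -- pass to the limit
  set L : ℝ := (I.card : ℝ) with hL
  have hDneg : D < 0 := hD0
  have hlin : Filter.Tendsto (fun mm : ℕ => 2 * (mm : ℝ) + 1) Filter.atTop Filter.atTop := by
    apply Filter.tendsto_atTop_add_const_right
    exact (tendsto_natCast_atTop_atTop (R := ℝ)).const_mul_atTop (by norm_num)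
  have hratio : Filter.Tendsto (fun mm : ℕ => (2 * (mm : ℝ) + 4 * (r : ℝ) + 5) / (2 * (mm : ℝ) + 1))
      Filter.atTop (nhds 1) := by
    have hrw : ∀ mm : ℕ, (2 * (mm : ℝ) + 4 * (r : ℝ) + 5) / (2 * (mm : ℝ) + 1)
        = 1 + (4 * (r : ℝ) + 4) / (2 * (mm : ℝ) + 1) := by
      intro mm
      have hne : (2 * (mm : ℝ) + 1) ≠ 0 := by positivity
      field_simp
      ring
    simp only [hrw]
    have h1 : Filter.Tendsto (fun mm : ℕ => (4 * (r : ℝ) + 4) / (2 * (mm : ℝ) + 1))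
        Filter.atTop (nhds 0) := Filter.Tendsto.div_atTop tendsto_const_nhds hlin
    have := (tendsto_const_nhds (x := (1 : ℝ)) (f := Filter.atTop (α := ℕ))).add h1
    simpa using this
  have hpow : Filter.Tendsto
      (fun mm : ℕ => ((2 * (mm : ℝ) + 4 * (r : ℝ) + 5) / (2 * (mm : ℝ) + 1)) ^ (n + 1))
      Filter.atTop (nhds 1) := by
    have := hratio.pow (n + 1)
    simpa using this
  have hfin : Filter.Tendsto
      (fun mm : ℕ => D + (2 * C * L) *
        (((2 * (mm : ℝ) + 4 * (r : ℝ) + 5) / (2 * (mm : ℝ) + 1)) ^ (n + 1) - 1))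
      Filter.atTop (nhds D) := by
    have h2 := ((hpow.sub_const 1).const_mul (2 * C * L)).const_add D
    simpa using h2
  have hev := hfin.eventually_lt_const hDneg
  obtain ⟨mm, hmm⟩ := hev.exists
  have hBpos : (0 : ℝ) < (2 * (mm : ℝ) + 1) ^ (n + 1) := by positivity
  have hBne : (2 * (mm : ℝ) + 1) ^ (n + 1) ≠ 0 := ne_of_gt hBpos
  have hneg := mul_neg_of_neg_of_pos hmm hBpos
  have hexp : (D + (2 * C * L) *
      (((2 * (mm : ℝ) + 4 * (r : ℝ) + 5) / (2 * (mm : ℝ) + 1)) ^ (n + 1) - 1))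
        * (2 * (mm : ℝ) + 1) ^ (n + 1)
      = D * (2 * (mm : ℝ) + 1) ^ (n + 1) +
        (L * (2 * (mm : ℝ) + 4 * (r : ℝ) + 5) ^ (n + 1) -
          L * (2 * (mm : ℝ) + 1) ^ (n + 1)) * (2 * C) := by
    rw [div_pow]
    field_simp
  rw [hexp] at hneg
  have := main mm
  linarith

end FK
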